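/- arXiv:2203.13543 — 6 statements merged into one kernel-verified Lean document; each statement's English description precedes it below -/
import Mathlib

section
/- Let σ be a word of length n and π a word of length m, with σ and π disjoint. Then ∑_{α ∈ S(σ,π)} q^{maj(α)} = [n+m choose m]_q · q^{maj(σ)+maj(π)} as an identity of polynomials in q. -/
open Polynomial List

/-- The set of (1-indexed) descents of a word `w`: indices `i` with
`1 ≤ i ≤ length w - 1` and `w_i > w_{i+1}`. -/
def descents (w : List ℕ) : Finset ℕ :=
  (Finset.Ico 1 w.length).filter (fun i => w.getD i 0 < w.getD (i - 1) 0)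

/-- The number of descents of a word. -/
def des (w : List ℕ) : ℕ := (descents w).card

/-- The major index of a word: the sum of its descents. -/
def maj (w : List ℕ) : ℕ := ∑ i ∈ descents w, i

/-- `dge i w` is the number of descents of `w` that are `≥ i`. -/
def dge (i : ℕ) (w : List ℕ) : ℕ := ((descents w).filter (fun j => i ≤ j)).card

/-- `α` is a shuffle of the disjoint words `σ` and `π`. -/
def IsShuffle (σ π α : List ℕ) : Prop :=
  α.length = σ.length + π.length ∧ σ.Sublist α ∧ π.Sublist α

/-- `ins σ i r` is `σ^{(i)}(r)`, the word obtained by inserting `r`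
immediately before `σ_{i+1}` (after `σ_n` when `i = n`). -/
def ins (σ : List ℕ) (i r : ℕ) : List ℕ := σ.insertIdx i r

/-- The major increment `im(σ,i,r) = maj(σ^{(i)}(r)) - maj(σ)`. -/
def im (σ : List ℕ) (i r : ℕ) : ℤ := (maj (ins σ i r) : ℤ) - (maj σ : ℤ)

/-- The space `i` (for `0 ≤ i ≤ n`) is an RL-space of `σ` relative to `r`. -/
def IsRL (σ : List ℕ) (r i : ℕ) : Prop :=
  (i = σ.length ∧ ∀ x ∈ σ.getLast?, x < r) ∨
  (i = 0 ∧ ∀ x ∈ σ.head?, r < x) ∨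
  (0 < i ∧ i < σ.length ∧ r < σ.getD i 0 ∧ σ.getD i 0 < σ.getD (i - 1) 0) ∨
  (0 < i ∧ i < σ.length ∧ σ.getD i 0 < σ.getD (i - 1) 0 ∧ σ.getD (i - 1) 0 < r) ∨
  (0 < i ∧ i < σ.length ∧ σ.getD (i - 1) 0 < r ∧ r < σ.getD i 0)

/-- The Gaussian binomial coefficient `[N choose M]_q`, as a polynomial in `q`:
`∏_{j=1}^{M} (1 - q^{N-M+j}) / ∏_{j=1}^{M} (1 - q^{j})` when `0 ≤ M ≤ N`, and `0` otherwise. -/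
noncomputable def gauss (N M : ℤ) : Polynomial ℚ :=
  if 0 ≤ M ∧ M ≤ N then
    (∏ j ∈ Finset.Icc 1 M.toNat, (1 - (X : Polynomial ℚ) ^ (N - M + j).toNat)) /
      (∏ j ∈ Finset.Icc 1 M.toNat, (1 - (X : Polynomial ℚ) ^ (j : ℕ)))
  else 0

/-- `delPrefix α π i` is `α^{(i)}`: the word obtained from `α` by deleting
the letters `π₁, …, π_i`. -/
def delPrefix (α π : List ℕ) (i : ℕ) : List ℕ :=
  α.filter (fun x => !((π.take i).contains x))

/-!
Following Garsia and Gessel, call a labelling `v` of a word `w` by naturals compatible when it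
is weakly decreasing, and strictly decreasing across every descent of `w`; equivalently, the pairs
`(vᵢ, wᵢ)` increase strictly for `LabelLT`. Splitting off the first label gives the Pascal
recursion of Gaussian binomials, so the compatible labellings with labels `≤ B` have generating
function `q^(maj w) [|w| + B - des w choose |w|]_q`. A compatible labelling of a shuffle of `σ`
and `π` splits into compatible labellings of `σ` and of `π`, and two such labellings merge back in
exactly one way, so these generating functions multiply over the shuffles. Multiplied by
`(q; q)_|w|`, each Gaussian binomial becomes `(q^(C + 1); q)_|w| ≡ 1 (mod q^(C + 1))` where
`C = B - des w`; letting `B → ∞` leaves the theorem.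
-/

namespace GarsiaGessel

section Descents

def headDescent (x : ℕ) (w : List ℕ) : ℕ := if w ≠ [] ∧ w.getD 0 0 < x then 1 else 0

lemma headDescent_le_one (x : ℕ) (w : List ℕ) : headDescent x w ≤ 1 := by
  unfold headDescent; split_ifs <;> omega

lemma descents_cons (x : ℕ) (w : List ℕ) :
    descents (x :: w) = (descents w).map (addRightEmbedding 1) ∪
      (if w ≠ [] ∧ w.getD 0 0 < x then {1} else ∅) := by
  ext (_ | _ | i)
  · split_ifs <;> simp [descents]
  · cases w <;> split_ifs <;> simp_all [descents]
  · split_ifs <;> simp [descents]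

lemma des_cons (x : ℕ) (w : List ℕ) : des (x :: w) = des w + headDescent x w := by
  rw [des, descents_cons, Finset.card_union_of_disjoint, Finset.card_map, des, headDescent]
  · split_ifs <;> rfl
  · split_ifs <;> simp [descents]

lemma maj_cons (x : ℕ) (w : List ℕ) : maj (x :: w) = maj w + des w + headDescent x w := by
  rw [maj, descents_cons, Finset.sum_union, Finset.sum_map, maj, des, headDescent]
  · split_ifs <;> simp [Finset.sum_add_distrib]
  · split_ifs <;> simp [descents]

lemma des_le_length (w : List ℕ) : des w ≤ w.length :=
  (Finset.card_filter_le _ _).trans (by simp)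

end Descents

section LabelOrder

def LabelLT (p q : ℕ × ℕ) : Prop := q.1 < p.1 ∨ p.1 = q.1 ∧ p.2 < q.2

instance : DecidableRel LabelLT := fun _ _ => by unfold LabelLT; infer_instance

instance : Trans LabelLT LabelLT LabelLT := ⟨fun h₁ h₂ => by unfold LabelLT at *; omega⟩

instance : Std.Irrefl LabelLT := ⟨fun _ h => by unfold LabelLT at h; omega⟩

instance : Std.Antisymm LabelLT := ⟨fun _ _ h₁ h₂ => by unfold LabelLT at *; omega⟩

def labelLE (p q : ℕ × ℕ) : Bool := q.1 < p.1 ∨ p.1 = q.1 ∧ p.2 ≤ q.2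

lemma pairwise_labelLT_mergeSort {l : List (ℕ × ℕ)} (hl : (l.map Prod.snd).Nodup) :
    (l.mergeSort labelLE).Pairwise LabelLT := by
  have hle := List.pairwise_mergeSort (le := labelLE)
    (fun _ _ _ => by simp only [labelLE, decide_eq_true_eq]; omega)
    (fun _ _ => by simp only [labelLE, Bool.or_eq_true, decide_eq_true_eq]; omega) l
  have hne : (l.mergeSort labelLE).Pairwise (fun p q => p.2 ≠ q.2) :=
    List.pairwise_map.mp (((List.mergeSort_perm l labelLE).map Prod.snd).nodup_iff.mpr hl)
  exact (hle.and hne).imp fun ⟨h₁, h₂⟩ => by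
    simp only [labelLE, decide_eq_true_eq] at h₁; unfold LabelLT; omega

lemma forall_labelLT_iff {L : List (ℕ × ℕ)} {w : List ℕ} {a x : ℕ} (hL : L.Pairwise LabelLT)
    (hw : L.map Prod.snd = w) (hx : x ∉ w) :
    (∀ p ∈ L, LabelLT (a, x) p) ↔
      headDescent x w ≤ a ∧ ∀ p ∈ L, p.1 ≤ a - headDescent x w := by
  subst hw
  cases L with
  | nil => simp [headDescent]
  | cons p L =>
    obtain ⟨hp, -⟩ := List.pairwise_cons.mp hL
    have hxp : x ≠ p.2 := fun h => hx (by simp [h])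
    simp only [List.forall_mem_cons, headDescent, List.map_cons, ne_eq, reduceCtorEq,
      not_false_eq_true, List.getD_cons_zero, true_and]
    constructor
    · rintro ⟨h₀, -⟩
      refine ⟨by unfold LabelLT at h₀; split_ifs <;> omega, by
        unfold LabelLT at h₀; split_ifs <;> omega, fun q hq => ?_⟩
      have := hp q hq
      unfold LabelLT at h₀ this; split_ifs <;> omega
    · rintro ⟨hd, h₀, -⟩
      have hap : LabelLT (a, x) p := by unfold LabelLT; split_ifs at hd h₀ <;> omega
      exact ⟨hap, fun q hq => _root_.trans hap (hp q hq)⟩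

end LabelOrder

section Compatible

def boundedLists : ℕ → ℕ → Finset (List ℕ)
  | 0, _ => {[]}
  | N + 1, B => (Finset.range (B + 1)).biUnion fun a => (boundedLists N B).image (a :: ·)

lemma mem_boundedLists {N B : ℕ} {v : List ℕ} :
    v ∈ boundedLists N B ↔ v.length = N ∧ ∀ a ∈ v, a ≤ B := by
  induction N generalizing v with
  | zero => cases v <;> simp [boundedLists]
  | succ N ih =>
    cases v with
    | nil => simp [boundedLists]
    | cons a v => simp [boundedLists, ih, and_comm, and_left_comm]

def compatible (w : List ℕ) (B : ℕ) : Finset (List ℕ) :=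
  (boundedLists w.length B).filter fun v => (v.zip w).Pairwise LabelLT

lemma mem_compatible {w v : List ℕ} {B : ℕ} :
    v ∈ compatible w B ↔
      v.length = w.length ∧ (∀ p ∈ v.zip w, p.1 ≤ B) ∧ (v.zip w).Pairwise LabelLT := by
  simp only [compatible, Finset.mem_filter, mem_boundedLists, and_assoc]
  refine and_congr_right fun hlen => ?_
  nth_rewrite 1 [← List.map_fst_zip hlen.le]
  simp only [List.forall_mem_map]

lemma compatible_nil (B : ℕ) : compatible [] B = {[]} := by
  ext v; cases v <;> simp [mem_compatible]

lemma nil_notMem_compatible_cons (x : ℕ) (w : List ℕ) (B : ℕ) : [] ∉ compatible (x :: w) B := by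
  simp [mem_compatible]

lemma cons_mem_compatible_cons {x a B : ℕ} {w v : List ℕ} (hx : x ∉ w) :
    a :: v ∈ compatible (x :: w) B ↔
      a ≤ B ∧ headDescent x w ≤ a ∧ v ∈ compatible w (a - headDescent x w) := by
  simp only [mem_compatible, List.length_cons, Nat.add_right_cancel_iff, List.zip_cons_cons,
    List.forall_mem_cons, List.pairwise_cons]
  constructor
  · rintro ⟨hlen, ⟨haB, -⟩, hhead, hL⟩
    obtain ⟨hd, hle⟩ := (forall_labelLT_iff hL (List.map_snd_zip hlen.ge) hx).mp hhead
    exact ⟨haB, hd, hlen, hle, hL⟩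
  · rintro ⟨haB, hd, hlen, hle, hL⟩
    refine ⟨hlen, ⟨haB, fun p hp => (hle p hp).trans (by omega)⟩, ?_, hL⟩
    exact (forall_labelLT_iff hL (List.map_snd_zip hlen.ge) hx).mpr ⟨hd, hle⟩

lemma compatible_cons_zero {x : ℕ} {w : List ℕ} (hx : x ∉ w) :
    compatible (x :: w) 0 =
      if headDescent x w = 0 then (compatible w 0).map ⟨(0 :: ·), List.cons_injective⟩ else ∅ := by
  ext (_ | ⟨a, v⟩)
  · simp only [nil_notMem_compatible_cons, false_iff]
    split_ifs <;> simp
  · rw [cons_mem_compatible_cons hx]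
    split_ifs with hd
    · simp only [hd, Finset.mem_map, Function.Embedding.coeFn_mk, List.cons.injEq]
      constructor
      · rintro ⟨ha, -, hv⟩
        exact ⟨v, by simpa [show a = 0 by omega] using hv, by omega, rfl⟩
      · rintro ⟨u, hu, rfl, rfl⟩
        exact ⟨le_rfl, le_rfl, hu⟩
    · simp only [Finset.notMem_empty, iff_false]
      omega

lemma compatible_cons_succ {x : ℕ} {w : List ℕ} (hx : x ∉ w) (B : ℕ) :
    compatible (x :: w) (B + 1) = compatible (x :: w) B ∪
      (compatible w (B + 1 - headDescent x w)).map ⟨((B + 1) :: ·), List.cons_injective⟩ := by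
  have hd := headDescent_le_one x w
  ext (_ | ⟨a, v⟩)
  · simp [nil_notMem_compatible_cons]
  · simp only [Finset.mem_union, Finset.mem_map, Function.Embedding.coeFn_mk, List.cons.injEq,
      cons_mem_compatible_cons hx]
    constructor
    · rintro ⟨ha, hda, hv⟩
      rcases Nat.lt_or_ge B a with hBa | haB
      · obtain rfl : a = B + 1 := by omega
        exact Or.inr ⟨v, hv, rfl, rfl⟩
      · exact Or.inl ⟨haB, hda, hv⟩
    · rintro (⟨ha, hda, hv⟩ | ⟨u, hu, rfl, rfl⟩)
      · exact ⟨by omega, hda, hv⟩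
      · exact ⟨le_rfl, by omega, hu⟩

lemma disjoint_compatible_cons_succ {x : ℕ} {w : List ℕ} (B : ℕ) :
    Disjoint (compatible (x :: w) B)
      ((compatible w (B + 1 - headDescent x w)).map ⟨((B + 1) :: ·), List.cons_injective⟩) := by
  simp only [Finset.disjoint_left, Finset.mem_map, Function.Embedding.coeFn_mk, not_exists,
    not_and]
  rintro _ hv u - rfl
  have := (mem_compatible.mp hv).2.1 (B + 1, x) (by simp)
  omega

end Compatible

section BoxPolynomial

variable {R : Type*} [CommRing R]

/-- The generating function of partitions in an `N × C` box, i.e. the Gaussian binomial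
`[N + C choose N]_q`, defined by its Pascal recursion. -/
noncomputable def boxGF : ℕ → ℕ → R[X]
  | 0, _ => 1
  | _ + 1, 0 => 1
  | N + 1, C + 1 => boxGF (N + 1) C + X ^ (C + 1) * boxGF N (C + 1)
termination_by N C => N + C

@[simp] lemma boxGF_zero_left (C : ℕ) : (boxGF 0 C : R[X]) = 1 := by rw [boxGF]

@[simp] lemma boxGF_zero_right (N : ℕ) : (boxGF N 0 : R[X]) = 1 := by
  cases N <;> rw [boxGF]

lemma boxGF_succ_succ (N C : ℕ) :
    (boxGF (N + 1) (C + 1) : R[X]) = boxGF (N + 1) C + X ^ (C + 1) * boxGF N (C + 1) := by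
  rw [boxGF]

/-- `qShiftedFactorial a N` is the `q`-shifted factorial `(q^(a+1); q)_N`. -/
noncomputable def qShiftedFactorial (a N : ℕ) : R[X] :=
  ∏ j ∈ Finset.range N, (1 - X ^ (a + j + 1))

lemma qShiftedFactorial_succ (a N : ℕ) :
    (qShiftedFactorial a (N + 1) : R[X]) = qShiftedFactorial a N * (1 - X ^ (a + N + 1)) :=
  Finset.prod_range_succ _ _

lemma qShiftedFactorial_succ' (a N : ℕ) :
    (qShiftedFactorial a (N + 1) : R[X]) = (1 - X ^ (a + 1)) * qShiftedFactorial (a + 1) N := by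
  simp only [qShiftedFactorial, Finset.prod_range_succ', mul_comm, add_assoc, add_comm 1]

lemma qShiftedFactorial_add (a N M : ℕ) :
    (qShiftedFactorial a (N + M) : R[X]) = qShiftedFactorial a N * qShiftedFactorial (a + N) M := by
  simp only [qShiftedFactorial, Finset.prod_range_add, add_assoc]

lemma boxGF_mul_qShiftedFactorial (N C : ℕ) :
    (boxGF N C * qShiftedFactorial 0 N : R[X]) = qShiftedFactorial C N := by
  induction N generalizing C with
  | zero => simp [qShiftedFactorial]
  | succ N ih =>
    induction C with
    | zero => simp
    | succ C ihC =>
      rw [boxGF_succ_succ, add_mul, ihC, qShiftedFactorial_succ 0 N, mul_assoc,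
        ← mul_assoc _ _ (1 - _), ih, qShiftedFactorial_succ', qShiftedFactorial_succ]
      ring

end BoxPolynomial

section GeneratingFunction

variable {R : Type*} [CommRing R]

noncomputable def compatibleGF (w : List ℕ) (B : ℕ) : R[X] :=
  ∑ v ∈ compatible w B, X ^ v.sum

lemma compatibleGF_nil (B : ℕ) : (compatibleGF [] B : R[X]) = 1 := by
  simp [compatibleGF, compatible_nil]

lemma compatibleGF_cons_zero {x : ℕ} {w : List ℕ} (hx : x ∉ w) :
    (compatibleGF (x :: w) 0 : R[X]) = if headDescent x w = 0 then compatibleGF w 0 else 0 := by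
  rw [compatibleGF, compatible_cons_zero hx]
  split_ifs <;> simp [compatibleGF]

lemma compatibleGF_cons_succ {x : ℕ} {w : List ℕ} (hx : x ∉ w) (B : ℕ) :
    (compatibleGF (x :: w) (B + 1) : R[X]) =
      compatibleGF (x :: w) B + X ^ (B + 1) * compatibleGF w (B + 1 - headDescent x w) := by
  rw [compatibleGF, compatible_cons_succ hx, Finset.sum_union (disjoint_compatible_cons_succ B),
    Finset.sum_map, compatibleGF, compatibleGF, Finset.mul_sum]
  simp [pow_add]

theorem compatibleGF_eq {w : List ℕ} (hw : w.Nodup) (B : ℕ) :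
    (compatibleGF w B : R[X]) =
      if des w ≤ B then X ^ maj w * boxGF w.length (B - des w) else 0 := by
  induction w generalizing B with
  | nil => simp [compatibleGF_nil, des, maj, descents]
  | cons x w ih =>
    obtain ⟨hx, hw⟩ := List.nodup_cons.mp hw
    have hd := headDescent_le_one x w
    rw [des_cons, maj_cons, List.length_cons]
    induction B with
    | zero =>
      rw [compatibleGF_cons_zero hx, ih hw]
      split_ifs <;> first | omega | simp_all
    | succ B ihB =>
      rw [compatibleGF_cons_succ hx, ihB, ih hw]
      obtain hB | hB | ⟨C, rfl⟩ : B + 1 < des w + headDescent x w ∨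
          B + 1 = des w + headDescent x w ∨ ∃ C, B = des w + headDescent x w + C := by
        rcases Nat.lt_or_ge B (des w + headDescent x w) with h | h
        · omega
        · exact Or.inr (Or.inr (Nat.exists_eq_add_of_le h))
      · split_ifs <;> first | omega | simp
      · split_ifs <;> try omega
        rw [← hB, Nat.sub_self, show B + 1 - headDescent x w - des w = 0 by omega,
          show maj w + des w + headDescent x w = B + 1 + maj w by omega]
        simp [pow_add]
      · split_ifs <;> try omega
        rw [show des w + headDescent x w + C + 1 - headDescent x w - des w = C + 1 by omega,
          show des w + headDescent x w + C + 1 - (des w + headDescent x w) = C + 1 by omega,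
          Nat.add_sub_cancel_left, boxGF_succ_succ]
        ring

end GeneratingFunction

section Shuffle

lemma _root_.IsShuffle.perm {σ π α : List ℕ} (h : IsShuffle σ π α) (hdisj : σ.Disjoint π) :
    α ~ σ ++ π := by
  obtain ⟨hlen, hσ, hπ⟩ := h
  have hsub : σ ++ π <+~ α := by
    rw [List.subperm_ext_iff]
    intro a ha
    rw [List.count_append]
    rcases List.mem_append.mp ha with h | h
    · rw [List.count_eq_zero.mpr fun h' => hdisj h h', add_zero]
      exact hσ.count_le a
    · rw [List.count_eq_zero.mpr fun h' => hdisj h' h, zero_add]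
      exact hπ.count_le a
  exact (hsub.perm_of_length_le (by simp [hlen])).symm

lemma filter_mem_eq_of_sublist {β : Type*} [DecidableEq β] {τ l : List β} (h : τ <+ l)
    (hl : l.Nodup) : l.filter (· ∈ τ) = τ := by
  have h₁ := h.filter (· ∈ τ)
  rw [List.filter_eq_self.mpr fun x hx => by simpa using hx] at h₁
  refine (h₁.eq_of_length (le_antisymm h₁.length_le ?_)).symm
  exact (List.subperm_of_subset (hl.filter _) fun x hx => by
    simpa using (List.mem_filter.mp hx).2).length_le

lemma snd_mem_of_mem_zip {p : ℕ × ℕ} {v w : List ℕ} (hp : p ∈ v.zip w) : p.2 ∈ w :=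
  (List.of_mem_zip (a := p.1) (b := p.2) hp).2

def restrictLabels (τ α v : List ℕ) : List ℕ :=
  ((v.zip α).filter (·.2 ∈ τ)).map Prod.fst

def mergeLabels (σ π g h : List ℕ) : List (ℕ × ℕ) :=
  (g.zip σ ++ h.zip π).mergeSort labelLE

section Restrict

variable {τ α v : List ℕ} {B : ℕ}

lemma map_snd_filter_zip (hlen : v.length = α.length) (hτ : τ <+ α) (hα : α.Nodup) :
    ((v.zip α).filter (·.2 ∈ τ)).map Prod.snd = τ := by
  have := List.filter_map (f := Prod.snd) (p := (· ∈ τ)) (l := v.zip α)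
  rw [List.map_snd_zip hlen.ge, filter_mem_eq_of_sublist hτ hα] at this
  exact this.symm

lemma zip_restrictLabels (hlen : v.length = α.length) (hτ : τ <+ α) (hα : α.Nodup) :
    (restrictLabels τ α v).zip τ = (v.zip α).filter (·.2 ∈ τ) :=
  (List.zip_of_prod rfl (map_snd_filter_zip hlen hτ hα)).symm

lemma restrictLabels_mem_compatible (hv : v ∈ compatible α B) (hτ : τ <+ α) (hα : α.Nodup) :
    restrictLabels τ α v ∈ compatible τ B := by
  obtain ⟨hlen, hB, hL⟩ := mem_compatible.mp hv
  refine mem_compatible.mpr ⟨?_, ?_, ?_⟩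
  · rw [restrictLabels, List.length_map, ← List.length_map (f := Prod.snd),
      map_snd_filter_zip hlen hτ hα]
  · rw [zip_restrictLabels hlen hτ hα]
    exact fun p hp => hB p (List.mem_of_mem_filter hp)
  · rw [zip_restrictLabels hlen hτ hα]
    exact hL.sublist List.filter_sublist

end Restrict

section Merge

variable {σ π g h : List ℕ} {B : ℕ}

lemma mem_mergeLabels {p : ℕ × ℕ} : p ∈ mergeLabels σ π g h ↔ p ∈ g.zip σ ∨ p ∈ h.zip π := by
  simp [mergeLabels]

lemma pairwise_mergeLabels (hσπ : (σ ++ π).Nodup) (hg : g.length = σ.length)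
    (hh : h.length = π.length) : (mergeLabels σ π g h).Pairwise LabelLT :=
  pairwise_labelLT_mergeSort <| by
    rwa [List.map_append, List.map_snd_zip hg.ge, List.map_snd_zip hh.ge]

lemma sum_map_fst_mergeLabels (hg : g.length = σ.length) (hh : h.length = π.length) :
    ((mergeLabels σ π g h).map Prod.fst).sum = g.sum + h.sum := by
  rw [mergeLabels, ((List.mergeSort_perm _ _).map _).sum_eq, List.map_append,
    List.map_fst_zip hg.le, List.map_fst_zip hh.le, List.sum_append]

lemma filter_mergeLabels_left (hσπ : (σ ++ π).Nodup) (hg : g ∈ compatible σ B)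
    (hh : h.length = π.length) : (mergeLabels σ π g h).filter (·.2 ∈ σ) = g.zip σ := by
  obtain ⟨hgl, -, hgL⟩ := mem_compatible.mp hg
  refine ((pairwise_mergeLabels hσπ hgl hh).sublist List.filter_sublist).eq_of_mem_iff hgL
    fun p => ?_
  simp only [List.mem_filter, mem_mergeLabels, decide_eq_true_eq]
  refine ⟨fun ⟨hp, hpσ⟩ => hp.resolve_right fun hp' => ?_,
    fun hp => ⟨.inl hp, snd_mem_of_mem_zip hp⟩⟩
  exact (List.nodup_append'.mp hσπ).2.2 hpσ (snd_mem_of_mem_zip hp')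

lemma filter_mergeLabels_right (hσπ : (σ ++ π).Nodup) (hg : g.length = σ.length)
    (hh : h ∈ compatible π B) : (mergeLabels σ π g h).filter (·.2 ∈ π) = h.zip π := by
  obtain ⟨hhl, -, hhL⟩ := mem_compatible.mp hh
  refine ((pairwise_mergeLabels hσπ hg hhl).sublist List.filter_sublist).eq_of_mem_iff hhL
    fun p => ?_
  simp only [List.mem_filter, mem_mergeLabels, decide_eq_true_eq]
  refine ⟨fun ⟨hp, hpπ⟩ => hp.resolve_left fun hp' => ?_,
    fun hp => ⟨.inr hp, snd_mem_of_mem_zip hp⟩⟩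
  exact (List.nodup_append'.mp hσπ).2.2 (snd_mem_of_mem_zip hp') hpπ

lemma zip_map_fst_map_snd (L : List (ℕ × ℕ)) : (L.map Prod.fst).zip (L.map Prod.snd) = L :=
  (List.zip_of_prod rfl rfl).symm

lemma isShuffle_mergeLabels (hσπ : (σ ++ π).Nodup) (hg : g ∈ compatible σ B)
    (hh : h ∈ compatible π B) : IsShuffle σ π ((mergeLabels σ π g h).map Prod.snd) := by
  have hgl := (mem_compatible.mp hg).1
  have hhl := (mem_compatible.mp hh).1
  refine ⟨?_, ?_, ?_⟩
  · simp [mergeLabels, hgl, hhl]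
  · have := (List.filter_sublist (l := mergeLabels σ π g h) (p := (·.2 ∈ σ))).map Prod.snd
    rwa [filter_mergeLabels_left hσπ hg hhl, List.map_snd_zip hgl.ge] at this
  · have := (List.filter_sublist (l := mergeLabels σ π g h) (p := (·.2 ∈ π))).map Prod.snd
    rwa [filter_mergeLabels_right hσπ hgl hh, List.map_snd_zip hhl.ge] at this

lemma map_fst_mergeLabels_mem_compatible (hσπ : (σ ++ π).Nodup) (hg : g ∈ compatible σ B)
    (hh : h ∈ compatible π B) :
    (mergeLabels σ π g h).map Prod.fst ∈ compatible ((mergeLabels σ π g h).map Prod.snd) B := by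
  obtain ⟨hgl, hgB, -⟩ := mem_compatible.mp hg
  obtain ⟨hhl, hhB, -⟩ := mem_compatible.mp hh
  refine mem_compatible.mpr ⟨by simp, ?_, ?_⟩ <;> rw [zip_map_fst_map_snd]
  · intro p hp
    rcases mem_mergeLabels.mp hp with hp | hp
    exacts [hgB p hp, hhB p hp]
  · exact pairwise_mergeLabels hσπ hgl hhl

lemma restrictLabels_mergeLabels_left (hσπ : (σ ++ π).Nodup) (hg : g ∈ compatible σ B)
    (hh : h.length = π.length) :
    restrictLabels σ ((mergeLabels σ π g h).map Prod.snd) ((mergeLabels σ π g h).map Prod.fst) =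
      g := by
  rw [restrictLabels, zip_map_fst_map_snd, filter_mergeLabels_left hσπ hg hh,
    List.map_fst_zip (mem_compatible.mp hg).1.le]

lemma restrictLabels_mergeLabels_right (hσπ : (σ ++ π).Nodup) (hg : g.length = σ.length)
    (hh : h ∈ compatible π B) :
    restrictLabels π ((mergeLabels σ π g h).map Prod.snd) ((mergeLabels σ π g h).map Prod.fst) =
      h := by
  rw [restrictLabels, zip_map_fst_map_snd, filter_mergeLabels_right hσπ hg hh,
    List.map_fst_zip (mem_compatible.mp hh).1.le]

lemma mergeLabels_restrictLabels {α v : List ℕ} (hσπ : (σ ++ π).Nodup) (hα : IsShuffle σ π α)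
    (hv : v ∈ compatible α B) :
    mergeLabels σ π (restrictLabels σ α v) (restrictLabels π α v) = v.zip α := by
  obtain ⟨hlen, -, hL⟩ := mem_compatible.mp hv
  have hperm := hα.perm (List.nodup_append'.mp hσπ).2.2
  have hαnd := hperm.nodup_iff.mpr hσπ
  have hσl := (mem_compatible.mp (restrictLabels_mem_compatible hv hα.2.1 hαnd)).1
  have hπl := (mem_compatible.mp (restrictLabels_mem_compatible hv hα.2.2 hαnd)).1
  refine (pairwise_mergeLabels hσπ hσl hπl).eq_of_mem_iff hL fun p => ?_
  rw [mem_mergeLabels, zip_restrictLabels hlen hα.2.1 hαnd, zip_restrictLabels hlen hα.2.2 hαnd]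
  simp only [List.mem_filter, decide_eq_true_eq, ← and_or_left]
  exact and_iff_left_of_imp fun hp => List.mem_append.mp (hperm.subset (snd_mem_of_mem_zip hp))

end Merge

theorem sum_compatibleGF_shuffles {R : Type*} [CommRing R] {σ π : List ℕ}
    (hσπ : (σ ++ π).Nodup) {S : Finset (List ℕ)} (hS : ∀ α, α ∈ S ↔ IsShuffle σ π α) (B : ℕ) :
    ∑ α ∈ S, (compatibleGF α B : R[X]) = compatibleGF σ B * compatibleGF π B := by
  have hdisj := (List.nodup_append'.mp hσπ).2.2
  simp only [compatibleGF, Finset.sum_mul_sum, ← pow_add, Finset.sum_sigma',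
    ← Finset.sum_product' (compatible σ B) (compatible π B) fun g h => (X : R[X]) ^ (g.sum + h.sum)]
  symm
  refine Finset.sum_nbij'
    (fun q => ⟨(mergeLabels σ π q.1 q.2).map Prod.snd, (mergeLabels σ π q.1 q.2).map Prod.fst⟩)
    (fun p => (restrictLabels σ p.1 p.2, restrictLabels π p.1 p.2)) ?_ ?_ ?_ ?_ ?_
  · rintro ⟨g, h⟩ hgh
    obtain ⟨hg, hh⟩ := Finset.mem_product.mp hgh
    exact Finset.mem_sigma.mpr ⟨(hS _).mpr (isShuffle_mergeLabels hσπ hg hh),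
      map_fst_mergeLabels_mem_compatible hσπ hg hh⟩
  · rintro ⟨α, v⟩ hαv
    obtain ⟨hα, hv⟩ := Finset.mem_sigma.mp hαv
    have hsh := (hS α).mp hα
    have hαnd := (hsh.perm hdisj).nodup_iff.mpr hσπ
    exact Finset.mem_product.mpr ⟨restrictLabels_mem_compatible hv hsh.2.1 hαnd,
      restrictLabels_mem_compatible hv hsh.2.2 hαnd⟩
  · rintro ⟨g, h⟩ hgh
    obtain ⟨hg, hh⟩ := Finset.mem_product.mp hgh
    exact Prod.ext (restrictLabels_mergeLabels_left hσπ hg (mem_compatible.mp hh).1)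
      (restrictLabels_mergeLabels_right hσπ (mem_compatible.mp hg).1 hh)
  · rintro ⟨α, v⟩ hαv
    obtain ⟨hα, hv⟩ := Finset.mem_sigma.mp hαv
    have hlen := (mem_compatible.mp hv).1
    simp only [mergeLabels_restrictLabels hσπ ((hS α).mp hα) hv, List.map_snd_zip hlen.ge,
      List.map_fst_zip hlen.le]
  · rintro ⟨g, h⟩ hgh
    obtain ⟨hg, hh⟩ := Finset.mem_product.mp hgh
    rw [sum_map_fst_mergeLabels (mem_compatible.mp hg).1 (mem_compatible.mp hh).1]

end Shuffle

section Truncation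

variable {R : Type*} [CommRing R]

lemma mk_X_pow_eq_zero {K e : ℕ} (h : K ≤ e) :
    Ideal.Quotient.mk (Ideal.span {(X : R[X]) ^ K}) (X ^ e) = 0 :=
  Ideal.Quotient.eq_zero_iff_mem.mpr (Ideal.mem_span_singleton.mpr (pow_dvd_pow X h))

lemma mk_qShiftedFactorial {K a : ℕ} (h : K ≤ a + 1) (N : ℕ) :
    Ideal.Quotient.mk (Ideal.span {(X : R[X]) ^ K}) (qShiftedFactorial a N) = 1 := by
  rw [qShiftedFactorial, map_prod]
  exact Finset.prod_eq_one fun j _ => by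
    rw [map_sub, map_one, mk_X_pow_eq_zero (by omega), sub_zero]

lemma mk_compatibleGF_mul {w : List ℕ} (hw : w.Nodup) {K B : ℕ} (h : K + w.length ≤ B) :
    Ideal.Quotient.mk (Ideal.span {(X : R[X]) ^ K})
        (compatibleGF w B * qShiftedFactorial 0 w.length) =
      Ideal.Quotient.mk (Ideal.span {(X : R[X]) ^ K}) (X ^ maj w) := by
  have := des_le_length w
  rw [compatibleGF_eq hw, if_pos (by omega), mul_assoc, boxGF_mul_qShiftedFactorial, map_mul,
    mk_qShiftedFactorial (by omega), mul_one]

lemma eq_of_forall_mk_span_X_pow_eq {p q : R[X]}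
    (h : ∀ K, Ideal.Quotient.mk (Ideal.span {(X : R[X]) ^ K}) p =
      Ideal.Quotient.mk (Ideal.span {(X : R[X]) ^ K}) q) : p = q := by
  ext d
  rw [← sub_eq_zero, ← coeff_sub]
  exact X_pow_dvd_iff.mp (Ideal.mem_span_singleton.mp (Ideal.Quotient.eq.mp (h (d + 1)))) d
    (lt_add_one d)

end Truncation

lemma gauss_eq_boxGF (n m : ℕ) : gauss ((n : ℤ) + m) m = boxGF m n := by
  have hD : (qShiftedFactorial 0 m : ℚ[X]) ≠ 0 := Finset.prod_ne_zero_iff.mpr fun j _ h => by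
    simpa using congrArg (eval 0) h
  have hIcc (f : ℕ → ℚ[X]) : ∏ j ∈ Finset.Icc 1 m, f j = ∏ j ∈ Finset.range m, f (j + 1) := by
    rw [← Finset.Ico_add_one_right_eq_Icc, Finset.prod_Ico_eq_prod_range]
    simp [add_comm]
  rw [gauss, if_pos ⟨by positivity, by omega⟩, ← mul_div_cancel_right₀ (boxGF m n) hD,
    boxGF_mul_qShiftedFactorial, Int.toNat_natCast, hIcc, hIcc]
  congr 1 <;> refine Finset.prod_congr rfl fun j _ => ?_
  · congr 2; omega
  · simp

end GarsiaGessel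

open GarsiaGessel in
/-- **Garsia–Gessel.** -/
theorem garsia_gessel (n m : ℕ) (σ π : List ℕ)
    (hσl : σ.length = n) (hπl : π.length = m) (hσnd : σ.Nodup) (hπnd : π.Nodup)
    (hdisj : σ.Disjoint π)
    (S : Finset (List ℕ)) (hS : ∀ α, α ∈ S ↔ IsShuffle σ π α) :
    ∑ α ∈ S, (X : Polynomial ℚ) ^ maj α =
      gauss ((n : ℤ) + m) (m : ℤ) * (X : Polynomial ℚ) ^ (maj σ + maj π) := by
  have hσπ : (σ ++ π).Nodup := List.nodup_append'.mpr ⟨hσnd, hπnd, hdisj⟩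
  rw [gauss_eq_boxGF, mul_comm]
  refine eq_of_forall_mk_span_X_pow_eq fun K => ?_
  set φ := Ideal.Quotient.mk (Ideal.span {(X : ℚ[X]) ^ K})
  set B := K + (n + m)
  have hshuffle : ∀ α ∈ S, φ (X ^ maj α) = φ (compatibleGF α B * qShiftedFactorial 0 (n + m)) := by
    intro α hα
    have hperm := ((hS α).mp hα).perm hdisj
    have hlen : α.length = n + m := by rw [hperm.length_eq, List.length_append, hσl, hπl]
    rw [← hlen, mk_compatibleGF_mul (hperm.nodup_iff.mpr hσπ) (by omega)]
  calc φ (∑ α ∈ S, X ^ maj α)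
      = φ ((∑ α ∈ S, compatibleGF α B) * qShiftedFactorial 0 (n + m)) := by
        rw [Finset.sum_mul, map_sum, map_sum]
        exact Finset.sum_congr rfl hshuffle
    _ = φ (compatibleGF σ B * qShiftedFactorial 0 n) *
          φ (compatibleGF π B * qShiftedFactorial 0 m) * φ (boxGF m n) := by
        rw [sum_compatibleGF_shuffles hσπ hS, qShiftedFactorial_add, zero_add,
          ← boxGF_mul_qShiftedFactorial m n, ← map_mul, ← map_mul]
        exact congrArg φ (by ring)
    _ = φ (X ^ (maj σ + maj π) * boxGF m n) := by
        rw [← hσl, ← hπl, mk_compatibleGF_mul hσnd (by omega), mk_compatibleGF_mul hπnd (by omega),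
          pow_add, map_mul, map_mul]
end

section
/- Let σ = σ₁σ₂⋯σ_n be a word of length n and let r be a natural number not occurring in σ. Then ∑_{i=0}^{n} q^{maj(σ^{(i)}(r))} = (1 + q + ⋯ + q^{n}) · q^{maj(σ)} as an identity of polynomials in q. -/
open Polynomial List

/-!
Induct on `σ` by appending its last letter: `σ = τ x` with `|τ| = m`. Appending `x` to a word `w`
adds the descent `|w|` to `maj w` exactly when `x` is less than the last letter of `w`. So inserting
`r` into any of the first `m` spaces of `σ` multiplies the corresponding term for `τ` by one common
factor (`q ^ (m + 1)` if `x` is below the last letter `l` of `τ`, else `1`), and the two spaces next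
to `x` supply the remaining two terms. In each consistent ordering of `x`, `r` and `l` the claim
then reduces to `q [m + 1]_q + 1 = [m + 1]_q + q ^ (m + 1)`.
-/

lemma descents_append_singleton (w : List ℕ) (x : ℕ) :
    descents (w ++ [x]) =
      if x < w.getD (w.length - 1) 0 then insert w.length (descents w) else descents w := by
  ext i
  split_ifs with hx <;>
  · simp only [descents, Finset.mem_insert, Finset.mem_filter, Finset.mem_Ico, length_append,
      length_singleton]
    rcases lt_trichotomy i w.length with hi | rfl | hi
    · rw [getD_append _ _ _ _ hi, getD_append _ _ _ _ (by omega)]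
      omega
    · rw [getD_append_right _ _ _ _ le_rfl, Nat.sub_self, getD_cons_zero]
      rcases Nat.eq_zero_or_pos w.length with h0 | hpos
      · simp_all [length_eq_zero_iff]
      · rw [getD_append _ _ _ _ (by omega)]
        omega
    · omega

lemma length_notMem_descents (w : List ℕ) : w.length ∉ descents w := by
  simp [descents]

lemma maj_append_singleton (w : List ℕ) (x : ℕ) :
    maj (w ++ [x]) = maj w + if x < w.getD (w.length - 1) 0 then w.length else 0 := by
  rw [maj, descents_append_singleton]
  split_ifs
  · rw [Finset.sum_insert (length_notMem_descents w), maj, add_comm]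
  · rw [maj, add_zero]

lemma ins_append_of_le {w : List ℕ} {i : ℕ} (hi : i ≤ w.length) (r : ℕ) (v : List ℕ) :
    ins (w ++ v) i r = ins w i r ++ v := by
  induction w generalizing i with
  | nil => simp_all [ins]
  | cons a w ih =>
    cases i with
    | zero => simp [ins]
    | succ i => simp_all [ins, insertIdx_succ_cons]

lemma length_ins_of_le {w : List ℕ} {i : ℕ} (hi : i ≤ w.length) (r : ℕ) :
    (ins w i r).length = w.length + 1 :=
  length_insertIdx_of_le_length hi r

lemma getD_ins_length_of_lt {w : List ℕ} {i : ℕ} (hi : i < w.length) (r : ℕ) :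
    (ins w i r).getD w.length 0 = w.getD (w.length - 1) 0 := by
  rw [ins, getD_eq_getElem?_getD, getElem?_insertIdx_of_gt hi, getD_eq_getElem?_getD]

lemma ins_length_self (w : List ℕ) (r : ℕ) : ins w w.length r = w ++ [r] := insertIdx_length_self

theorem sum_pow_maj_ins {R : Type*} [CommRing R] (q : R) (w : List ℕ) (r : ℕ) (hr : r ∉ w) :
    ∑ i ∈ Finset.range (w.length + 1), q ^ maj (ins w i r) =
      (∑ j ∈ Finset.range (w.length + 1), q ^ j) * q ^ maj w := by
  induction w using List.reverseRecOn with
  | nil => simp [ins, maj, descents]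
  | append_singleton τ x ih =>
    have hrx : r ≠ x := fun h => hr (by simp [h])
    specialize ih fun h => hr (mem_append_left _ h)
    set m := τ.length with hm
    set l := τ.getD (m - 1) 0 with hl
    set G := ∑ j ∈ Finset.range (m + 1), q ^ j with hGdef
    have hG : q * G + 1 = G + q ^ (m + 1) := geom_sum_succ.symm.trans (Finset.sum_range_succ _ _)
    have hprefix : ∀ i ∈ Finset.range m, q ^ maj (ins (τ ++ [x]) i r) =
        q ^ (if x < l then m + 1 else 0) * q ^ maj (ins τ i r) := by
      intro i hi
      rw [Finset.mem_range] at hi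
      rw [ins_append_of_le hi.le, maj_append_singleton, length_ins_of_le hi.le,
        Nat.add_sub_cancel, getD_ins_length_of_lt hi, pow_add, mul_comm]
    have hmid : maj (ins (τ ++ [x]) m r) =
        maj τ + (if r < l then m else 0) + (if x < r then m + 1 else 0) := by
      rw [ins_append_of_le le_rfl, ins_length_self, maj_append_singleton, maj_append_singleton]
      simp [m, l]
    have hlast : maj (ins (τ ++ [x]) (m + 1) r) =
        maj τ + (if x < l then m else 0) + (if r < x then m + 1 else 0) := by
      rw [show m + 1 = (τ ++ [x]).length by simp [m], ins_length_self, maj_append_singleton,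
        maj_append_singleton]
      simp [m, l]
    rw [Finset.sum_range_succ, ins_length_self, maj_append_singleton] at ih
    rw [length_append, length_singleton, Finset.sum_range_succ, Finset.sum_range_succ,
      Finset.sum_congr rfl hprefix, ← Finset.mul_sum, hmid, hlast, maj_append_singleton,
      Finset.sum_range_succ, ← hm, ← hl, ← hGdef]
    by_cases hxl : x < l
    · split_ifs at ih ⊢ <;>
        first | omega | linear_combination q ^ (m + 1) * ih + q ^ (maj τ + m) * hG
    · split_ifs at ih ⊢ <;> first | omega | linear_combination ih

theorem insertion_sum_general (n : ℕ) (σ : List ℕ) (hσl : σ.length = n)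
    (r : ℕ) (hr : r ∉ σ) :
    ∑ i ∈ Finset.range (n + 1), (X : Polynomial ℚ) ^ maj (ins σ i r) =
      (∑ j ∈ Finset.range (n + 1), (X : Polynomial ℚ) ^ j) * (X : Polynomial ℚ) ^ maj σ := by
  subst hσl
  exact sum_pow_maj_ins X σ r hr

/-- Inserting a new letter `r` into all `n+1` spaces of `σ` multiplies the
generating function `q^{maj σ}` by `1 + q + ⋯ + q^n`. -/
theorem insertion_sum (n : ℕ) (σ : List ℕ) (hσl : σ.length = n) (hσnd : σ.Nodup)
    (r : ℕ) (hr : r ∉ σ) :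
    ∑ i ∈ Finset.range (n + 1), (X : Polynomial ℚ) ^ maj (ins σ i r) =
      (∑ j ∈ Finset.range (n + 1), (X : Polynomial ℚ) ^ j) * (X : Polynomial ℚ) ^ maj σ :=
  insertion_sum_general n σ hσl r hr
end

section
/- Let σ = σ₁⋯σ_n be a word of length n and r a natural number not occurring in σ. If i (with 0 ≤ i ≤ n) is an RL-space of σ relative to r, then des(σ^{(i)}(r)) = des(σ). -/
open Polynomial List

/-! Descents are local: `des (a ++ x :: y :: b)` is the descents of `a ++ [x]`, plus `[y < x]`,
plus the descents of `y :: b`. Inserting `r` between `x` and `y` trades `[y < x]` for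
`[r < x] + [y < r]`, and the RL-space conditions are exactly the cases where these agree; at
either end of the word they say that `r` creates no descent. -/

lemma des_eq_sum_range (w : List ℕ) :
    des w = ∑ k ∈ Finset.range (w.length - 1), if w.getD (k + 1) 0 < w.getD k 0 then 1 else 0 := by
  rw [des, descents, Finset.card_filter, Finset.sum_Ico_eq_sum_range]
  refine Finset.sum_congr rfl fun k _ => ?_
  simp only [Nat.add_comm 1 k, Nat.add_sub_cancel]

lemma des_singleton (x : ℕ) : des [x] = 0 := by
  simp [des_eq_sum_range]

lemma des_cons_cons (x y : ℕ) (t : List ℕ) :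
    des (x :: y :: t) = (if y < x then 1 else 0) + des (y :: t) := by
  simp only [des_eq_sum_range, List.length_cons, Nat.add_sub_cancel, Finset.sum_range_succ',
    List.getD_cons_succ, List.getD_cons_zero]
  ring

lemma des_append_cons_cons (a : List ℕ) (x y : ℕ) (b : List ℕ) :
    des (a ++ x :: y :: b) = des (a ++ [x]) + (if y < x then 1 else 0) + des (y :: b) := by
  induction a with
  | nil => simp [des_cons_cons, des_singleton]
  | cons z a ih =>
    cases a with
    | nil => simp [des_cons_cons, des_singleton]; ring
    | cons w a => simp only [List.cons_append, des_cons_cons] at ih ⊢; rw [ih]; ring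

lemma des_insert_between (a b : List ℕ) {x y r : ℕ}
    (h : (r < y ∧ y < x) ∨ (y < x ∧ x < r) ∨ (x < r ∧ r < y)) :
    des (a ++ x :: r :: y :: b) = des (a ++ x :: y :: b) := by
  rw [des_append_cons_cons, des_cons_cons, des_append_cons_cons]
  rcases h with ⟨h1, h2⟩ | ⟨h1, h2⟩ | ⟨h1, h2⟩ <;> split_ifs <;> omega

lemma insertIdx_append_length {α : Type*} (a b : List α) (x : α) :
    (a ++ b).insertIdx a.length x = a ++ x :: b := by
  induction a with
  | nil => rfl
  | cons z a ih => simp [List.insertIdx_succ_cons, ih]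

lemma exists_eq_append_cons_cons {α : Type*} {σ : List α} {i : ℕ} (h0 : 0 < i)
    (hi : i < σ.length) :
    ∃ a x y b, σ = a ++ x :: y :: b ∧ a.length + 1 = i := by
  refine ⟨σ.take (i - 1), σ[i - 1], σ[i], σ.drop (i + 1), ?_, by simp; omega⟩
  have hi' : i - 1 + 1 = i := by omega
  calc σ = σ.take (i - 1) ++ σ.drop (i - 1) := (List.take_append_drop _ _).symm
    _ = _ := by
      rw [List.drop_eq_getElem_cons (by omega), List.drop_eq_getElem_cons (by omega)]
      simp only [hi']

theorem rl_space_des_general (σ : List ℕ) (r : ℕ) (i : ℕ) (hRL : IsRL σ r i) :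
    des (ins σ i r) = des σ := by
  rcases hRL with ⟨rfl, hlast⟩ | ⟨rfl, hhead⟩ | hmid
  · rcases List.eq_nil_or_concat σ with rfl | ⟨a, x, rfl⟩
    · rfl
    · have hx : x < r := by simpa using hlast
      rw [List.concat_eq_append, ins, List.insertIdx_length_self, List.append_assoc,
        List.singleton_append, des_append_cons_cons, if_neg (Nat.not_lt.2 hx.le), des_singleton,
        Nat.add_zero]
  · cases σ with
    | nil => rfl
    | cons y b =>
      have hy : r < y := by simpa using hhead
      simp [ins, des_cons_cons, Nat.not_lt.2 hy.le]
  · obtain ⟨h0, hi⟩ : 0 < i ∧ i < σ.length := by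
      rcases hmid with ⟨h0, hi, -⟩ | ⟨h0, hi, -⟩ | ⟨h0, hi, -⟩ <;> exact ⟨h0, hi⟩
    obtain ⟨a, x, y, b, rfl, rfl⟩ := exists_eq_append_cons_cons h0 hi
    have hx : (a ++ x :: y :: b).getD a.length 0 = x := by simp
    have hy : (a ++ x :: y :: b).getD (a.length + 1) 0 = y := by simp
    simp only [Nat.add_sub_cancel, hx, hy, h0, hi, true_and] at hmid
    have hins := insertIdx_append_length (a ++ [x]) (y :: b) r
    simp only [List.append_assoc, List.singleton_append, List.length_append,
      List.length_singleton] at hins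
    rw [ins, hins]
    exact des_insert_between a b hmid

/-- Inserting into an RL-space leaves the number of descents unchanged. -/
theorem rl_space_des (n : ℕ) (σ : List ℕ) (hσl : σ.length = n) (hσnd : σ.Nodup)
    (r : ℕ) (hr : r ∉ σ) (i : ℕ) (hi : i ≤ n) (hRL : IsRL σ r i) :
    des (ins σ i r) = des σ :=
  rl_space_des_general σ r i hRL
end

section
/- Let σ = σ₁⋯σ_n be a word of length n and r a natural number not occurring in σ. Then the number of RL-spaces of σ relative to r (among the spaces 0, 1, …, n) is exactly des(σ) + 1, and consequently the number of LR-spaces is n − des(σ). -/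
open Polynomial List

/-!
Writing `[P]` for the indicator of `P`, an interior space `i` satisfies
`[i is RL] = [σᵢ > σᵢ₊₁] + ([σᵢ < r] - [σᵢ₊₁ < r])` as soon as `r ≠ σᵢ, σᵢ₊₁`. Summing over the
interior spaces, the corrections telescope to `[σ₁ < r] - [σₙ < r]`; the two end spaces add
`[r < σ₁] + [σₙ < r]`, and as `r ≠ σ₁` the total is `des σ + 1`. The remaining `n - des σ` of the
`n + 1` spaces are the LR-spaces.
-/

lemma natCast_des_eq_sum (σ : List ℕ) :
    (des σ : ℤ) = ∑ k ∈ Finset.range (σ.length - 1),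
      if σ.getD (k + 1) 0 < σ.getD k 0 then 1 else 0 := by
  rw [des, descents, Finset.natCast_card_filter, Finset.sum_Ico_eq_sum_range]
  simp only [add_comm 1, Nat.add_sub_cancel]

section RLSpaces

open scoped Classical

variable {σ : List ℕ} {r : ℕ}

lemma isRL_zero_iff (hσ : σ ≠ []) : IsRL σ r 0 ↔ r < σ.getD 0 0 := by
  obtain ⟨a, τ, rfl⟩ := List.exists_cons_of_ne_nil hσ
  simp [IsRL]

lemma isRL_length_iff (hσ : σ ≠ []) : IsRL σ r σ.length ↔ σ.getD (σ.length - 1) 0 < r := by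
  have hpos := List.length_pos_iff.2 hσ
  have hlast : σ.getLast? = some (σ.getD (σ.length - 1) 0) := by
    rw [List.getLast?_eq_getElem?, List.getElem?_eq_getElem (by omega), List.getD_eq_getElem]
  simp [IsRL, hlast, hpos.ne']

lemma getD_ne_of_notMem (hr : r ∉ σ) {i : ℕ} (hi : i < σ.length) : σ.getD i 0 ≠ r := by
  rw [List.getD_eq_getElem _ _ hi]
  exact fun h => hr (h ▸ List.getElem_mem hi)

lemma indicator_isRL_of_pos_of_lt (hr : r ∉ σ) {i : ℕ} (hi₀ : 0 < i) (hi : i < σ.length) :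
    (if IsRL σ r i then 1 else 0 : ℤ) =
      (if σ.getD i 0 < σ.getD (i - 1) 0 then 1 else 0) +
        ((if σ.getD (i - 1) 0 < r then 1 else 0) - (if σ.getD i 0 < r then 1 else 0)) := by
  have ha := getD_ne_of_notMem hr (i := i - 1) (by omega)
  have hb := getD_ne_of_notMem hr hi
  have hiff : IsRL σ r i ↔ r < σ.getD i 0 ∧ σ.getD i 0 < σ.getD (i - 1) 0 ∨
      σ.getD i 0 < σ.getD (i - 1) 0 ∧ σ.getD (i - 1) 0 < r ∨
      σ.getD (i - 1) 0 < r ∧ r < σ.getD i 0 := by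
    simp only [IsRL]
    grind
  rw [if_congr hiff rfl rfl]
  split_ifs <;> omega

theorem card_filter_isRL (hr : r ∉ σ) :
    ((Finset.range (σ.length + 1)).filter (fun i => IsRL σ r i)).card = des σ + 1 := by
  rcases eq_or_ne σ [] with rfl | hσ
  · simp [IsRL, des, descents, Finset.filter_singleton]
  obtain ⟨m, hm⟩ : ∃ m, σ.length = m + 1 := Nat.exists_eq_succ_of_ne_zero (by simpa using hσ)
  have hfirst := getD_ne_of_notMem hr (i := 0) (by omega)
  have hlast := isRL_length_iff (r := r) hσ
  rw [hm, Nat.add_sub_cancel] at hlast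
  have hinterior (k : ℕ) (hk : k ∈ Finset.range m) := indicator_isRL_of_pos_of_lt hr
    (i := k + 1) (by omega) (by simp at hk; omega)
  simp only [Nat.add_sub_cancel] at hinterior
  zify
  rw [Finset.natCast_card_filter, natCast_des_eq_sum, hm, Nat.add_sub_cancel,
    Finset.sum_range_succ, Finset.sum_range_succ', Finset.sum_congr rfl hinterior,
    Finset.sum_add_distrib,
    Finset.sum_range_sub' (fun k => if σ.getD k 0 < r then (1 : ℤ) else 0),
    if_congr (isRL_zero_iff hσ) rfl rfl, if_congr hlast rfl rfl]
  split_ifs <;> omega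

end RLSpaces

open scoped Classical in
theorem rl_space_count_general (n : ℕ) (σ : List ℕ) (hσl : σ.length = n)
    (r : ℕ) (hr : r ∉ σ) :
    ((Finset.range (n + 1)).filter (fun i => IsRL σ r i)).card = des σ + 1 ∧
    ((Finset.range (n + 1)).filter (fun i => ¬ IsRL σ r i)).card = n - des σ := by
  subst hσl
  have hRL := card_filter_isRL hr
  have hsplit := Finset.card_filter_add_card_filter_not
    (s := Finset.range (σ.length + 1)) (fun i => IsRL σ r i)
  rw [Finset.card_range] at hsplit
  exact ⟨hRL, by omega⟩

open scoped Classical in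
/-- The number of RL-spaces of `σ` relative to `r` is `des σ + 1`; consequently the
number of LR-spaces is `n - des σ`. -/
theorem rl_space_count (n : ℕ) (σ : List ℕ) (hσl : σ.length = n) (hσnd : σ.Nodup)
    (r : ℕ) (hr : r ∉ σ) :
    ((Finset.range (n + 1)).filter (fun i => IsRL σ r i)).card = des σ + 1 ∧
    ((Finset.range (n + 1)).filter (fun i => ¬ IsRL σ r i)).card = n - des σ :=
  rl_space_count_general n σ hσl r hr
end

section
/- Let σ be a word of length n with des(σ) = k and r a natural number not occurring in σ. Then the major increment sequence MIS(σ,r) = (im(σ,0,r), im(σ,1,r), …, im(σ,n,r)) is a shuffle of the increasing sequence k+1, k+2, …, n and the decreasing sequence k, k−1, …, 1, 0; that is, it is a sequence of length n+1 whose entries are a permutation of {0,1,…,n} containing k+1, k+2, …, n as a subsequence and k, k−1, …, 1, 0 as a subsequence. -/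
/-!
Call a space `i` of `σ` an RL-space when inserting `r` there creates no new descent,
`des σ^{(i)}(r) = des σ`; otherwise it creates exactly one. Write `σ = L R` with `|L| = i`.
The descents of `σ^{(i)}(r) = L r R` inside `r R` sit `i` places to the right of their positions
in `r R`, and `maj (r R) = maj R + des (r R)`, so
`im(σ,i,r) = des (r R) + i·(des σ^{(i)}(r) - des σ)`.
Dropping the first letter `σ_{i+1} ≠ r` of `R` lowers `des (r R)` by one exactly when the space
`i + 1` behind it is an RL-space, so `des (r R)` counts the RL-spaces to the right of `i`, and
there are `des σ + 1` RL-spaces in all. Hence the RL-spaces, from left to right, carry the values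
`k, …, 1, 0`, while a non-RL space `i` carries `i` plus the number of RL-spaces to its right,
that is `k + 1` plus the number of non-RL spaces to its left.
-/

open Polynomial List

def IsRangeShuffle (K N : ℕ) (l : List ℕ) : Prop :=
  l ~ range N ∧ (range N).drop K <+ l ∧ (range K).reverse <+ l

lemma IsRangeShuffle.map_succ_append_zero {K N : ℕ} {l : List ℕ} (h : IsRangeShuffle K N l) :
    IsRangeShuffle (K + 1) (N + 1) (l.map Nat.succ ++ [0]) := by
  obtain ⟨hperm, hdrop, hrev⟩ := h
  refine ⟨?_, ?_, ?_⟩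
  · rw [range_succ_eq_map]
    exact (perm_append_singleton _ _).trans ((hperm.map _).cons 0)
  · rw [range_succ_eq_map, drop_succ_cons, ← map_drop]
    exact (hdrop.map _).trans (sublist_append_left _ _)
  · rw [range_succ_eq_map, reverse_cons, ← map_reverse]
    exact (hrev.map _).append (Sublist.refl _)

lemma IsRangeShuffle.append_length {K N : ℕ} {l : List ℕ} (h : IsRangeShuffle K N l) :
    IsRangeShuffle K (N + 1) (l ++ [N]) := by
  obtain ⟨hperm, hdrop, hrev⟩ := h
  have hKN : K ≤ N := by simpa [hperm.length_eq] using hrev.length_le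
  refine ⟨?_, ?_, hrev.trans (sublist_append_left _ _)⟩
  · rw [range_succ]
    exact hperm.append_right _
  · rw [range_succ, drop_append_of_le_length (by simpa using hKN)]
    exact hdrop.append (Sublist.refl _)

section Marks

open Finset

variable (p : ℕ → Prop) [DecidablePred p]

lemma card_filter_Ico_eq_card_filter_Ioo_add {a b : ℕ} (h : a < b) :
    #{j ∈ Ico a b | p j} = #{j ∈ Ioo a b | p j} + if p a then 1 else 0 := by
  rw [← Ioo_insert_left h, filter_insert]
  split_ifs <;> simp

lemma card_filter_Ioo_add_one_right {a b : ℕ} (h : a < b) :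
    #{j ∈ Ioo a (b + 1) | p j} = #{j ∈ Ioo a b | p j} + if p b then 1 else 0 := by
  rw [Ioo_add_one_right_eq_Ioc, ← Ioo_insert_right h, filter_insert]
  split_ifs <;> simp

def markValue (N i : ℕ) : ℕ := #{j ∈ Ioo i N | p j} + if p i then 0 else i

/-- Adding a position `N` raises every value by one and appends `0` when `N` is marked, and
appends `N` when it is not. -/
theorem isRangeShuffle_markValue (N : ℕ) :
    IsRangeShuffle #{j ∈ Finset.range N | p j} N ((List.range N).map (markValue p N)) := by
  induction N with
  | zero => simp [IsRangeShuffle]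
  | succ N ih =>
    have hlast : markValue p (N + 1) N = if p N then 0 else N := by simp [markValue]
    rw [List.range_succ, map_append, List.map_singleton, hlast, Finset.range_add_one,
      filter_insert]
    by_cases hN : p N
    · rw [if_pos hN, if_pos hN, card_insert_of_notMem (by simp)]
      convert ih.map_succ_append_zero using 2
      rw [List.map_map]
      refine List.map_congr_left fun i hi => ?_
      simp [markValue, card_filter_Ioo_add_one_right p (List.mem_range.1 hi), hN, add_right_comm]
    · rw [if_neg hN, if_neg hN]
      convert ih.append_length using 2
      refine List.map_congr_left fun i hi => ?_
      simp [markValue, card_filter_Ioo_add_one_right p (List.mem_range.1 hi), hN]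

end Marks

def consDes (a : ℕ) : List ℕ → ℕ
  | [] => 0
  | b :: _ => if b < a then 1 else 0

lemma consDes_le_one (a : ℕ) (w : List ℕ) : consDes a w ≤ 1 := by
  unfold consDes; split <;> [omega; split_ifs <;> omega]

lemma sum_descents_cons (a : ℕ) (w : List ℕ) (g : ℕ → ℕ) :
    ∑ i ∈ descents (a :: w), g i = ∑ i ∈ descents w, g (i + 1) + consDes a w * g 1 := by
  cases w with
  | nil => simp [descents, consDes]
  | cons b w =>
    simp only [descents, Finset.sum_filter, Finset.sum_Ico_eq_sum_range, length_cons,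
      add_tsub_cancel_right]
    rw [Finset.sum_range_succ']
    simp [consDes, add_comm, add_left_comm]

lemma des_cons (a : ℕ) (w : List ℕ) : des (a :: w) = des w + consDes a w := by
  simpa [des] using sum_descents_cons a w 1

lemma maj_cons (a : ℕ) (w : List ℕ) : maj (a :: w) = maj w + des w + consDes a w := by
  simpa [maj, des, Finset.sum_add_distrib, add_assoc] using sum_descents_cons a w id

lemma consDes_ins_succ (a : ℕ) (σ : List ℕ) (i r : ℕ) :
    consDes a (ins σ (i + 1) r) = consDes a σ := by
  cases σ <;> simp [ins, consDes]

/-- Space `i` is an RL-space of `σ` relative to `r` (`IsRL σ r i`) exactly when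
`desInc σ i r = 0`. -/
def desInc (σ : List ℕ) (i r : ℕ) : ℤ := (des (ins σ i r) : ℤ) - (des σ : ℤ)

lemma desInc_zero (σ : List ℕ) (r : ℕ) : desInc σ 0 r = consDes r σ := by
  simp [desInc, ins, des_cons]

lemma desInc_cons_one (a : ℕ) (R : List ℕ) (r : ℕ) :
    desInc (a :: R) 1 r = consDes r R + consDes a [r] - consDes a R := by
  simp only [desInc, ins, insertIdx_succ_cons, insertIdx_zero, des_cons, consDes]
  push_cast; ring

lemma desInc_cons_add_two (a : ℕ) (σ : List ℕ) (i r : ℕ) :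
    desInc (a :: σ) (i + 2) r = desInc σ (i + 1) r := by
  simp only [desInc, ins, insertIdx_succ_cons, des_cons]
  rw [← ins, consDes_ins_succ]; push_cast; ring

lemma desInc_succ_eq_drop (σ : List ℕ) (j r : ℕ) :
    desInc σ (j + 1) r = desInc (σ.drop j) 1 r := by
  induction j generalizing σ with
  | zero => rfl
  | succ j ih =>
    cases σ with
    | nil => simp [desInc, ins]
    | cons a σ => rw [desInc_cons_add_two, ih, drop_succ_cons]

lemma desInc_eq_zero_or_one (σ : List ℕ) (i r : ℕ) :
    desInc σ i r = 0 ∨ desInc σ i r = 1 := by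
  cases i with
  | zero => have := consDes_le_one r σ; rw [desInc_zero]; omega
  | succ j =>
    rw [desInc_succ_eq_drop]
    rcases σ.drop j with _ | ⟨a, _ | ⟨b, R⟩⟩
    · simp [desInc, ins]
    · simp only [desInc_cons_one, consDes]; split_ifs <;> simp
    · simp only [desInc_cons_one, consDes]; split_ifs <;> omega

lemma im_eq_des_cons_drop_add (σ : List ℕ) (i r : ℕ) :
    im σ i r = des (r :: σ.drop i) + i * desInc σ i r := by
  induction σ generalizing i with
  | nil => cases i <;> simp [im, ins, desInc, maj_cons, consDes, des, descents]
  | cons a σ ih =>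
    cases i with
    | zero =>
      simp only [im, ins, insertIdx_zero, maj_cons, des_cons, drop_zero]
      push_cast; ring
    | succ i =>
      have hinc : desInc (a :: σ) (i + 1) r =
          desInc σ i r + consDes a (ins σ i r) - consDes a σ := by
        simp only [desInc, ins, insertIdx_succ_cons, des_cons]; push_cast; ring
      -- for `i ≥ 1` the insertion does not change the letter that follows `a`
      have hhead : (i : ℤ) * consDes a (ins σ i r) = i * consDes a σ := by
        cases i with
        | zero => simp
        | succ i => rw [consDes_ins_succ]
      have := ih i
      simp only [im, ins, insertIdx_succ_cons, maj_cons, drop_succ_cons] at this ⊢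
      rw [hinc]
      simp only [desInc, ins] at this hhead ⊢
      push_cast at this ⊢
      linear_combination this - hhead

section RLSpaces

open Finset

lemma des_cons_drop_eq_succ_add (σ : List ℕ) {r : ℕ} (hr : r ∉ σ) {j : ℕ}
    (hj : j < σ.length) :
    des (r :: σ.drop j) =
      des (r :: σ.drop (j + 1)) + if desInc σ (j + 1) r = 0 then 1 else 0 := by
  have hinc : (des (r :: σ.drop j) : ℤ) + desInc σ (j + 1) r =
      des (r :: σ.drop (j + 1)) + 1 := by
    have hne : σ[j] ≠ r := fun h => hr (h ▸ getElem_mem hj)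
    rw [desInc_succ_eq_drop, drop_eq_getElem_cons hj]
    rcases σ.drop (j + 1) with _ | ⟨b, R⟩ <;>
      simp only [des_cons, desInc_cons_one, consDes] <;> split_ifs <;> push_cast <;> omega
  split_ifs <;> rcases desInc_eq_zero_or_one σ (j + 1) r with h | h <;> omega

lemma des_cons_drop_eq_card (σ : List ℕ) {r : ℕ} (hr : r ∉ σ) {i : ℕ}
    (hi : i ≤ σ.length) :
    des (r :: σ.drop i) = #{j ∈ Ioo i (σ.length + 1) | desInc σ j r = 0} := by
  obtain ⟨m, hm⟩ := Nat.exists_eq_add_of_le hi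
  induction m generalizing i with
  | zero =>
    rw [drop_of_length_le (by omega), hm, add_zero, ← Ico_add_one_left_eq_Ioo, Ico_self]
    rfl
  | succ m ih =>
    rw [des_cons_drop_eq_succ_add σ hr (by omega), ih (by omega) (by omega),
      ← Ico_add_one_left_eq_Ioo i, card_filter_Ico_eq_card_filter_Ioo_add _ (by omega)]

lemma card_filter_desInc_eq_zero (σ : List ℕ) {r : ℕ} (hr : r ∉ σ) :
    #{j ∈ Finset.range (σ.length + 1) | desInc σ j r = 0} = des σ + 1 := by
  rw [range_eq_Ico, card_filter_Ico_eq_card_filter_Ioo_add _ (Nat.succ_pos _),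
    ← des_cons_drop_eq_card σ hr (Nat.zero_le _), drop_zero, des_cons, desInc_zero]
  have := consDes_le_one r σ
  split_ifs <;> omega

lemma im_eq_markValue (σ : List ℕ) {r : ℕ} (hr : r ∉ σ) {i : ℕ} (hi : i ≤ σ.length) :
    im σ i r = markValue (fun j => desInc σ j r = 0) (σ.length + 1) i := by
  rw [im_eq_des_cons_drop_add, des_cons_drop_eq_card σ hr hi, markValue]
  rcases desInc_eq_zero_or_one σ i r with h | h <;> simp [h]

end RLSpaces

theorem mis_is_shuffle_general (n k : ℕ) (σ : List ℕ) (hσl : σ.length = n)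
    (hk : des σ = k) (r : ℕ) (hr : r ∉ σ) :
    letI MIS : List ℤ := (List.range (n + 1)).map (fun i => im σ i r)
    MIS.Perm ((List.range (n + 1)).map (fun j => (j : ℤ))) ∧
    (((List.range (n + 1)).map (fun j => (j : ℤ))).drop (k + 1)) <+ MIS ∧
    (((List.range (k + 1)).map (fun j => (j : ℤ))).reverse) <+ MIS := by
  subst hσl hk
  set value := markValue (fun j => desInc σ j r = 0) (σ.length + 1)
  obtain ⟨hperm, hdrop, hrev⟩ :=
    isRangeShuffle_markValue (fun j => desInc σ j r = 0) (σ.length + 1)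
  rw [card_filter_desInc_eq_zero σ hr] at hdrop hrev
  have hMIS : (List.range (σ.length + 1)).map (fun i => im σ i r) =
      ((List.range (σ.length + 1)).map value).map Nat.cast := by
    rw [List.map_map]
    exact List.map_congr_left fun i hi => im_eq_markValue σ hr (by simpa using hi)
  -- `map (fun j => (j : ℤ))` on a list of naturals elaborates as a monadic coercion of the list
  simp only [hMIS, map_id_fun', id_eq, bind_pure_comp, List.map_eq_map, ← List.map_drop,
    ← List.map_reverse]
  exact ⟨hperm.map _, hdrop.map _, hrev.map _⟩

/-- The major increment sequence `MIS(σ,r)` is a shuffle of the increasing sequence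
`k+1, …, n` and the decreasing sequence `k, k-1, …, 1, 0`, where `k = des σ`. -/
theorem mis_is_shuffle (n k : ℕ) (σ : List ℕ) (hσl : σ.length = n) (hσnd : σ.Nodup)
    (hk : des σ = k) (r : ℕ) (hr : r ∉ σ) :
    letI MIS : List ℤ := (List.range (n + 1)).map (fun i => im σ i r)
    MIS.Perm ((List.range (n + 1)).map (fun j => (j : ℤ))) ∧
    (((List.range (n + 1)).map (fun j => (j : ℤ))).drop (k + 1)) <+ MIS ∧
    (((List.range (k + 1)).map (fun j => (j : ℤ))).reverse) <+ MIS :=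
  mis_is_shuffle_general n k σ hσl hk r hr
end

section
/- Let σ be a word of length m and let p, q be two distinct natural numbers not occurring in σ. Then for every 1 ≤ i ≤ m, the set {im(σ^{(i−1)}(p), j, q) : 0 ≤ j < i} equals the set {im(σ, j, p) + χ(q > p) : 0 ≤ j < i}, where χ(q > p) = 1 if q > p and 0 otherwise; that is, MIS_i(σ^{(i−1)}(p), q) is a permutation of {im(σ,j,p) + χ(q>p) : 0 ≤ j < i}. -/
open Polynomial List

/-!
For a word `w` with distinct letters and a letter `r ∉ w`, the first `i` major increments
`im(w,0,r), …, im(w,i-1,r)` are the integers of an interval of length `i`. Inserting `r` into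
space `j` only changes the descents at positions `j` and `j + 1` and shifts those beyond by one,
which gives `im(w,j,r)` in terms of `dge (j+1) w` and the two letters around space `j`; from this,
each new increment lands just above or just below the interval formed by the previous ones, whose
lower end is `dge i w + 1 - χ(r < w_i)`. Both sides of the theorem are therefore intervals of
length `i`, and inserting `p` just before `w_i` shifts the lower end by exactly `χ(q > p)`.
-/

namespace List

variable {α : Type*} (l : List α) (x d : α) {i k : ℕ}

theorem getD_insertIdx_of_lt (h : k < i) : (l.insertIdx i x).getD k d = l.getD k d := by
  simp only [getD_eq_getElem?_getD, getElem?_insertIdx_of_lt h]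

theorem getD_insertIdx_self (h : i ≤ l.length) : (l.insertIdx i x).getD i d = x := by
  simp only [getD_eq_getElem?_getD, getElem?_insertIdx_self, if_pos h, Option.getD_some]

theorem getD_insertIdx_of_gt (h : i < k) : (l.insertIdx i x).getD k d = l.getD (k - 1) d := by
  simp only [getD_eq_getElem?_getD, getElem?_insertIdx_of_gt h]

theorem getD_ne_getD_of_nodup {l : List α} (hl : l.Nodup) {j : ℕ} (hk : k < l.length)
    (hj : j < l.length) (hkj : k ≠ j) : l.getD k d ≠ l.getD j d := by
  rw [getD_eq_getElem _ _ hk, getD_eq_getElem _ _ hj, Ne, hl.getElem_inj_iff]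
  exact hkj

theorem getD_ne_of_not_mem {l : List α} {a : α} (ha : a ∉ l) (hk : k < l.length) :
    l.getD k d ≠ a := by
  rw [getD_eq_getElem _ _ hk]
  exact fun h => ha (h ▸ getElem_mem hk)

end List

theorem Finset.sum_range_eq_add_sum_Ico {M : Type*} [AddCommMonoid M] (f : ℕ → M) {j n : ℕ}
    (h : j < n) :
    ∑ k ∈ range n, f k = ∑ k ∈ range j, f k + f j + ∑ k ∈ Ico (j + 1) n, f k := by
  rw [← sum_range_add_sum_Ico f h.le, sum_eq_sum_Ico_succ_bot h, add_assoc]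

section Descents

variable {w : List ℕ} {j k : ℕ}

theorem mem_descents :
    k ∈ descents w ↔ 1 ≤ k ∧ k < w.length ∧ w.getD k 0 < w.getD (k - 1) 0 := by
  simp [descents, and_assoc]

variable (w)

theorem descents_eq_filter_range :
    descents w = (Finset.range w.length).filter (fun k => w.getD k 0 < w.getD (k - 1) 0) := by
  ext k
  simp only [mem_descents, Finset.mem_filter, Finset.mem_range]
  constructor
  · exact fun ⟨_, hk, hd⟩ => ⟨hk, hd⟩
  · rintro ⟨hk, hd⟩
    rcases Nat.eq_zero_or_pos k with rfl | hpos
    · -- `0 - 1 = 0`, so position `0` compares `w₀` with itself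
      exact absurd hd (lt_irrefl _)
    · exact ⟨hpos, hk, hd⟩

theorem dge_eq_dge_succ_add (i : ℕ) :
    dge i w = dge (i + 1) w + if i ∈ descents w then 1 else 0 := by
  simp only [dge, Finset.card_filter]
  rw [← Finset.sum_ite_eq (descents w) i (fun _ => 1), ← Finset.sum_add_distrib]
  refine Finset.sum_congr rfl fun k _ => ?_
  split_ifs <;> omega

theorem sum_descents_insertIdx {M : Type*} [AddCommMonoid M] (g : ℕ → M) (r : ℕ)
    (hj : j < w.length) :
    ∑ k ∈ descents (w.insertIdx j r), g k =
      ∑ k ∈ descents w, (if k < j then g k else if j < k then g (k + 1) else 0)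
        + (if 0 < j ∧ r < w.getD (j - 1) 0 then g j else 0)
        + (if w.getD j 0 < r then g (j + 1) else 0) := by
  set τ := w.insertIdx j r
  have hlen : τ.length = w.length + 1 := length_insertIdx_of_le_length hj.le r
  have hlt : ∀ k < j, τ.getD k 0 = w.getD k 0 := fun k hk => getD_insertIdx_of_lt _ _ _ hk
  have hself : τ.getD j 0 = r := getD_insertIdx_self _ _ _ hj.le
  have hgt : ∀ k, j < k → τ.getD k 0 = w.getD (k - 1) 0 :=
    fun k hk => getD_insertIdx_of_gt _ _ _ hk
  clear_value τ
  rw [descents_eq_filter_range, descents_eq_filter_range, Finset.sum_filter, Finset.sum_filter,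
    hlen, Finset.sum_range_eq_add_sum_Ico _ (by omega : j < w.length + 1),
    Finset.sum_eq_sum_Ico_succ_bot (by omega : j + 1 < w.length + 1),
    Finset.sum_range_eq_add_sum_Ico _ hj,
    ← Finset.sum_Ico_add' (fun k => if τ.getD k 0 < τ.getD (k - 1) 0 then g k else 0) _ _ 1]
  have hbelow : ∑ k ∈ Finset.range j, (if τ.getD k 0 < τ.getD (k - 1) 0 then g k else 0) =
      ∑ k ∈ Finset.range j, (if w.getD k 0 < w.getD (k - 1) 0 then
        (if k < j then g k else if j < k then g (k + 1) else 0) else 0) := by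
    refine Finset.sum_congr rfl fun k hk => ?_
    have hk : k < j := Finset.mem_range.mp hk
    simp only [hlt k hk, hlt (k - 1) (by omega), hk, if_true]
  have habove : ∑ k ∈ Finset.Ico (j + 1) w.length,
      (if τ.getD (k + 1) 0 < τ.getD (k + 1 - 1) 0 then g (k + 1) else 0) =
      ∑ k ∈ Finset.Ico (j + 1) w.length, (if w.getD k 0 < w.getD (k - 1) 0 then
        (if k < j then g k else if j < k then g (k + 1) else 0) else 0) := by
    refine Finset.sum_congr rfl fun k hk => ?_
    have hk : j < k := (Finset.mem_Ico.mp hk).1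
    have hk' : ¬k < j := by omega
    simp only [hgt (k + 1) (by omega), Nat.add_sub_cancel, hgt k hk, hk, hk', if_true, if_false]
  have hat : (if τ.getD j 0 < τ.getD (j - 1) 0 then g j else 0) =
      if 0 < j ∧ r < w.getD (j - 1) 0 then g j else 0 := by
    rcases Nat.eq_zero_or_pos j with rfl | hpos
    · simp
    · simp only [hself, hlt (j - 1) (by omega), hpos, true_and]
  have hafter : (if τ.getD (j + 1) 0 < τ.getD (j + 1 - 1) 0 then g (j + 1) else 0) =
      if w.getD j 0 < r then g (j + 1) else 0 := by
    simp only [hgt (j + 1) (Nat.lt_add_one j), Nat.add_sub_cancel, hself]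
  have hdestroyed : (if w.getD j 0 < w.getD (j - 1) 0 then
      (if j < j then g j else if j < j then g (j + 1) else 0) else 0) = 0 := by
    simp
  rw [hbelow, habove, hat, hafter, hdestroyed, add_zero]
  abel

theorem im_eq_of_lt_length (r : ℕ) (hj : j < w.length) :
    im w j r = dge (j + 1) w + (if 0 < j ∧ r < w.getD (j - 1) 0 then (j : ℤ) else 0)
      + (if w.getD j 0 < r then (j : ℤ) + 1 else 0)
      - (if j ∈ descents w then (j : ℤ) else 0) := by
  have hins : maj (ins w j r) =
      ∑ k ∈ descents w, (if k < j then k else if j < k then k + 1 else 0)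
        + (if 0 < j ∧ r < w.getD (j - 1) 0 then j else 0)
        + (if w.getD j 0 < r then j + 1 else 0) :=
    sum_descents_insertIdx w (fun k => k) r hj
  have hsplit : ∑ k ∈ descents w, (if k < j then k else if j < k then k + 1 else 0)
      + (if j ∈ descents w then j else 0) = maj w + dge (j + 1) w := by
    rw [maj, dge, Finset.card_filter, ← Finset.sum_ite_eq (descents w) j (fun k => k),
      ← Finset.sum_add_distrib, ← Finset.sum_add_distrib]
    refine Finset.sum_congr rfl fun k _ => ?_
    split_ifs <;> omega
  have hdiff : maj (ins w j r) + (if j ∈ descents w then j else 0)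
      = maj w + dge (j + 1) w + (if 0 < j ∧ r < w.getD (j - 1) 0 then j else 0)
        + (if w.getD j 0 < r then j + 1 else 0) := by
    omega
  have hdiffZ := congrArg (Nat.cast : ℕ → ℤ) hdiff
  push_cast at hdiffZ
  rw [im]
  linarith

theorem dge_insertIdx (r : ℕ) (hj : j < w.length) :
    dge (j + 1) (w.insertIdx j r) = dge (j + 1) w + if w.getD j 0 < r then 1 else 0 := by
  simp only [dge, Finset.card_filter]
  rw [sum_descents_insertIdx w _ r hj, if_neg (Nat.not_succ_le_self j), ite_self, add_zero,
    if_pos (le_refl (j + 1))]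
  congr 1
  refine Finset.sum_congr rfl fun k _ => ?_
  split_ifs <;> omega

end Descents

/-- For `w` with distinct letters and `r ∉ w`, this is the number of RL-spaces of `w` relative to
`r` among the spaces `i, …, |w|`, in closed form. -/
def imMin (w : List ℕ) (r i : ℕ) : ℤ := dge i w + 1 - if r < w.getD (i - 1) 0 then 1 else 0

section MajorIncrements

variable {w : List ℕ} {r i : ℕ}

theorem im_zero_eq_imMin (hr : r ∉ w) (hw : 0 < w.length) : im w 0 r = imMin w r 1 := by
  have hne := getD_ne_of_not_mem 0 hr hw
  rw [im_eq_of_lt_length w r hw, imMin]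
  simp only [lt_irrefl, false_and, Nat.zero_add, Nat.sub_self, Nat.cast_zero, ite_self]
  split_ifs <;> omega

theorem im_eq_top_or_bottom (hw : w.Nodup) (hr : r ∉ w) (hi : 1 ≤ i) (hin : i < w.length) :
    (im w i r = imMin w r i + i ∧ imMin w r (i + 1) = imMin w r i) ∨
      (im w i r = imMin w r i - 1 ∧ imMin w r (i + 1) = imMin w r i - 1) := by
  have hab := getD_ne_getD_of_nodup 0 hw (by omega : i - 1 < w.length) hin (by omega)
  have har := getD_ne_of_not_mem 0 hr (by omega : i - 1 < w.length)
  have hbr := getD_ne_of_not_mem 0 hr hin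
  have hdesc : i ∈ descents w ↔ w.getD i 0 < w.getD (i - 1) 0 := by
    simp only [mem_descents, hi, hin, true_and]
  rw [im_eq_of_lt_length w r hin, imMin, imMin, dge_eq_dge_succ_add w i, Nat.add_sub_cancel]
  simp only [hdesc, show 0 < i by omega, true_and]
  split_ifs <;> push_cast <;> omega

theorem image_range_im_eq_Icc (hw : w.Nodup) (hr : r ∉ w) (hi : 1 ≤ i) (hin : i ≤ w.length) :
    (Finset.range i).image (fun j => im w j r) =
      Finset.Icc (imMin w r i) (imMin w r i + i - 1) := by
  induction i, hi using Nat.le_induction with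
  | base =>
    rw [Finset.range_one, Finset.image_singleton, im_zero_eq_imMin hr hin, Nat.cast_one,
      add_sub_cancel_right, Finset.Icc_self]
  | succ i hi ih =>
    rw [Finset.range_add_one, Finset.image_insert, ih (by omega)]
    rcases im_eq_top_or_bottom hw hr hi (by omega) with ⟨him, hmin⟩ | ⟨him, hmin⟩ <;>
    · rw [him, hmin]
      ext x
      simp only [Finset.mem_insert, Finset.mem_Icc]
      push_cast
      omega

theorem imMin_ins {p q : ℕ} (hp : p ∉ w) (hpq : p ≠ q) (hi : 1 ≤ i) (hin : i ≤ w.length) :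
    imMin (ins w (i - 1) p) q i = imMin w p i + if q > p then 1 else 0 := by
  obtain ⟨j, rfl⟩ : ∃ j, i = j + 1 := ⟨i - 1, by omega⟩
  have hne := getD_ne_of_not_mem 0 hp (by omega : j < w.length)
  rw [imMin, imMin, ins, Nat.add_sub_cancel, getD_insertIdx_self _ _ _ (by omega),
    dge_insertIdx w p (by omega)]
  split_ifs <;> push_cast <;> omega

end MajorIncrements

/-- **Novick's proposition.** `MIS_i(σ^{(i-1)}(p), q)` is a permutation of the set
`{im(σ,j,p) + χ(q > p) : 0 ≤ j < i}`. -/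
theorem mis_of_insertion (m : ℕ) (σ : List ℕ) (hσl : σ.length = m) (hσnd : σ.Nodup)
    (p q : ℕ) (hpq : p ≠ q) (hp : p ∉ σ) (hq : q ∉ σ)
    (i : ℕ) (hi1 : 1 ≤ i) (him : i ≤ m) :
    (Finset.range i).image (fun j => im (ins σ (i - 1) p) j q) =
      (Finset.range i).image (fun j => im σ j p + if q > p then 1 else 0) := by
  subst hσl
  have hperm : (ins σ (i - 1) p).Perm (p :: σ) := perm_insertIdx p σ (by omega)
  have hnodup : (ins σ (i - 1) p).Nodup := hperm.nodup_iff.mpr (nodup_cons.mpr ⟨hp, hσnd⟩)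
  have hqτ : q ∉ ins σ (i - 1) p := by
    rw [hperm.mem_iff, mem_cons, not_or]
    exact ⟨hpq.symm, hq⟩
  have hlen : i ≤ (ins σ (i - 1) p).length := by
    rw [hperm.length_eq, length_cons]
    omega
  have hshift : (Finset.range i).image (fun j => im σ j p + if q > p then 1 else 0) =
      ((Finset.range i).image (fun j => im σ j p)).image (· + if q > p then 1 else 0) := by
    rw [Finset.image_image]
    rfl
  rw [image_range_im_eq_Icc hnodup hqτ hi1 hlen, hshift, image_range_im_eq_Icc hσnd hp hi1 him,
    Finset.image_add_right_Icc, imMin_ins hp hpq hi1 him]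
  congr 1
  ring
end
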